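/- arXiv:1606.04040 — 2 statements merged into one kernel-verified Lean document; each statement's English description precedes it below -/
import Mathlib

section
/- Let F_q be a finite field of odd characteristic. Define σ : F_q^d → ℝ by σ(y) = q if |y|² = 0 and σ(y) = 0 otherwise. Then for every ξ ∈ F_q^d, |σ̂(ξ) − δ(ξ)| ≤ q^{1−d/2}, where δ(ξ) = 1 if ξ = 0 and 0 otherwise. -/
/-!
Writing `q · 1[a = 0] = ∑ₜ χ(t a)` turns `q^d σ̂(ξ)` into `∑ₜ S(t)` with `S(t) = ∑ₓ χ(f x)`,
`f x = t |x|² - ξ ⬝ x`. By orthogonality of characters `S(0) = q^d δ(ξ)`. For `t ≠ 0`,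
`|S(t)|² = ∑_{x,y} χ(f x - f y)`, and substituting `x = y + u` makes the exponent affine in `y`
with linear part `2 t u ⬝ y`; since `2t ≠ 0` in odd characteristic, only `u = 0` survives and
`|S(t)|² = q^d`. The remaining `q - 1` terms thus contribute at most `q · q^{d/2}`.
-/

open Matrix Finset ComplexConjugate
open scoped Classical

namespace AddChar

variable {F ι : Type*} [Field F] [Fintype F] [Fintype ι] [DecidableEq ι]

theorem sum_apply_dotProduct {R : Type*} [CommRing R] [IsDomain R] {χ : AddChar F R}
    (hχ : χ ≠ 1) (v : ι → F) :
    ∑ x : ι → F, χ (v ⬝ᵥ x) = if v = 0 then (Fintype.card F : R) ^ Fintype.card ι else 0 := by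
  split_ifs with hv
  · simp [hv]
  obtain ⟨i, hi⟩ := Function.ne_iff.mp hv
  obtain ⟨a, ha⟩ := ne_one_iff.mp (IsPrimitive.of_ne_one hχ hi)
  let ψ : AddChar (ι → F) R :=
    χ.compAddMonoidHom (AddMonoidHom.mk' (v ⬝ᵥ ·) (dotProduct_add v))
  have hψ : ψ ≠ 1 := ne_one_iff.mpr ⟨Pi.single i a, by simpa [ψ, dotProduct_single] using ha⟩
  exact sum_eq_zero_of_ne_one hψ

end AddChar

section QuadraticCharSum

variable {F ι : Type*} [Field F] [Fintype F] [Fintype ι] [DecidableEq ι]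

def quadraticCharSum (χ : AddChar F ℂ) (t : F) (ξ : ι → F) : ℂ :=
  ∑ x : ι → F, χ (t * (x ⬝ᵥ x) - ξ ⬝ᵥ x)

variable {χ : AddChar F ℂ}

theorem quadraticCharSum_zero_left (hχ : χ ≠ 1) (ξ : ι → F) :
    quadraticCharSum χ 0 ξ = if ξ = 0 then (Fintype.card F : ℂ) ^ Fintype.card ι else 0 := by
  simpa [quadraticCharSum] using AddChar.sum_apply_dotProduct hχ (-ξ)

theorem quadraticCharSum_mul_conj (hF : ringChar F ≠ 2) (hχ : χ ≠ 1) {t : F} (ht : t ≠ 0)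
    (ξ : ι → F) :
    quadraticCharSum χ t ξ * conj (quadraticCharSum χ t ξ) =
      (Fintype.card F : ℂ) ^ Fintype.card ι := by
  set f : (ι → F) → F := fun x ↦ t * (x ⬝ᵥ x) - ξ ⬝ᵥ x
  have h2t : (2 : F) * t ≠ 0 := mul_ne_zero (Ring.two_ne_zero hF) ht
  have hdiff : ∀ u y, f (y + u) - f y = f u + ((2 * t) • u) ⬝ᵥ y := fun u y ↦ by
    simp only [f, dotProduct_add, add_dotProduct, smul_dotProduct, smul_eq_mul,
      dotProduct_comm u y]
    ring
  calc quadraticCharSum χ t ξ * conj (quadraticCharSum χ t ξ)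
      = ∑ y, ∑ x, χ (f x - f y) := by
        simp_rw [quadraticCharSum, map_sum, ← AddChar.map_neg_eq_conj, sum_mul_sum,
          ← AddChar.map_add_eq_mul, ← sub_eq_add_neg]
        exact sum_comm
    _ = ∑ y, ∑ u, χ (f u + ((2 * t) • u) ⬝ᵥ y) := by
        simp_rw [← hdiff]
        exact sum_congr rfl fun y _ ↦ Fintype.sum_equiv (Equiv.addLeft y).symm _ _ fun x ↦ by simp
    _ = ∑ u, χ (f u) * ∑ y, χ (((2 * t) • u) ⬝ᵥ y) := by
        simp_rw [mul_sum, ← AddChar.map_add_eq_mul]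
        exact sum_comm
    _ = (Fintype.card F : ℂ) ^ Fintype.card ι := by
        simp only [AddChar.sum_apply_dotProduct hχ, smul_eq_zero, h2t, false_or, mul_ite,
          mul_zero, sum_ite_eq', mem_univ, if_true]
        simp [f]

theorem norm_quadraticCharSum (hF : ringChar F ≠ 2) (hχ : χ ≠ 1) {t : F} (ht : t ≠ 0)
    (ξ : ι → F) :
    ‖quadraticCharSum χ t ξ‖ = (Fintype.card F : ℝ) ^ ((Fintype.card ι : ℝ) / 2) := by
  have hsq : ‖quadraticCharSum χ t ξ‖ ^ 2 = (Fintype.card F : ℝ) ^ Fintype.card ι := by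
    have h := quadraticCharSum_mul_conj hF hχ ht ξ
    rw [Complex.mul_conj'] at h
    exact_mod_cast h
  rw [← Real.sqrt_sq (norm_nonneg _), hsq, Real.sqrt_eq_rpow, ← Real.rpow_natCast,
    ← Real.rpow_mul (Nat.cast_nonneg _)]
  ring_nf

theorem norm_sum_erase_zero_quadraticCharSum_le (hF : ringChar F ≠ 2) (hχ : χ ≠ 1)
    (ξ : ι → F) :
    ‖∑ t ∈ univ.erase 0, quadraticCharSum χ t ξ‖ ≤
      Fintype.card F * (Fintype.card F : ℝ) ^ ((Fintype.card ι : ℝ) / 2) :=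
  calc ‖∑ t ∈ univ.erase 0, quadraticCharSum χ t ξ‖
      ≤ ∑ t ∈ univ.erase 0, ‖quadraticCharSum χ t ξ‖ := norm_sum_le _ _
    _ = #(univ.erase (0 : F)) * (Fintype.card F : ℝ) ^ ((Fintype.card ι : ℝ) / 2) := by
        rw [sum_congr rfl fun t ht ↦ norm_quadraticCharSum hF hχ (ne_of_mem_erase ht) ξ,
          sum_const, nsmul_eq_mul]
    _ ≤ Fintype.card F * (Fintype.card F : ℝ) ^ ((Fintype.card ι : ℝ) / 2) := by
        gcongr
        exact card_le_univ _

theorem sum_isotropic_mul_addChar_eq_sum_quadraticCharSum (hχ : χ ≠ 1) (ξ : ι → F) :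
    ∑ x : ι → F, (if x ⬝ᵥ x = 0 then (Fintype.card F : ℂ) else 0) * χ (-(ξ ⬝ᵥ x)) =
      ∑ t, quadraticCharSum χ t ξ := by
  have hind : ∀ a : F, (if a = 0 then (Fintype.card F : ℂ) else 0) = ∑ t, χ (t * a) := fun a ↦ by
    rw [AddChar.sum_mulShift _ (AddChar.IsPrimitive.of_ne_one hχ)]
    split_ifs <;> simp
  simp_rw [quadraticCharSum, hind, sum_mul, ← AddChar.map_add_eq_mul, ← sub_eq_add_neg]
  exact sum_comm

end QuadraticCharSum

/-- Fourier asymptotic for the sphere of radius zero: with `σ = q·1[|y|² = 0]`,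
`|σ̂(ξ) - δ(ξ)| ≤ q^{1 - d/2}`. -/
theorem zero_sphere_fourier_decay {F : Type*} [Field F] [Fintype F]
    (hodd : ringChar F ≠ 2) (χ : AddChar F ℂ) (hχ : χ ≠ 1)
    (d : ℕ) (ξ : Fin d → F) :
    ‖(∑ x : Fin d → F,
          (if x ⬝ᵥ x = 0 then (Fintype.card F : ℂ) else 0) * χ (-(ξ ⬝ᵥ x))) /
            (Fintype.card F : ℂ) ^ d -
        (if ξ = 0 then 1 else 0)‖ ≤
      (Fintype.card F : ℝ) ^ ((1 : ℝ) - (d : ℝ) / 2) := by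
  set q := Fintype.card F
  have hq : (0 : ℝ) < q := Nat.cast_pos.mpr Fintype.card_pos
  have hδ : (if ξ = 0 then (q : ℂ) ^ d else 0) / (q : ℂ) ^ d = if ξ = 0 then 1 else 0 := by
    split_ifs <;> simp
  rw [sum_isotropic_mul_addChar_eq_sum_quadraticCharSum hχ, ← add_sum_erase _ _ (mem_univ 0),
    quadraticCharSum_zero_left hχ, Fintype.card_fin, add_div, hδ, add_sub_cancel_left,
    norm_div, norm_pow, Complex.norm_natCast, div_le_iff₀ (by positivity)]
  calc ‖∑ t ∈ univ.erase 0, quadraticCharSum χ t ξ‖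
      ≤ q * (q : ℝ) ^ ((d : ℝ) / 2) := by
        simpa using norm_sum_erase_zero_quadraticCharSum_le hodd hχ ξ
    _ = (q : ℝ) ^ ((1 : ℝ) - d / 2) * q ^ d := by
        rw [← Real.rpow_natCast, ← Real.rpow_add hq, ← Real.rpow_one_add' hq.le (by positivity)]
        ring_nf
end

section
/- Let F_q be a finite field of odd characteristic and let y_1,…,y_{j−1} ∈ F_q^d be linearly independent with V = Span(y_1,…,y_{j−1}). Fix c_1,…,c_{j−1}, t ∈ F_q and suppose there exists z ∈ F_q^d with y_i·z = c_i for all i. Then for every ξ ∈ F_q^d and s ∈ F_q^*, |Σ_{x ∈ V^⊥} χ(s|x|² + ξ·x)|² ≤ q^{d−j+1}·|V ∩ V^⊥|. -/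
/-!
Weyl differencing. For `f x = s |x|² + ξ·x` on `W = V^⊥`, `|∑_{x ∈ W} χ(f x)|²` equals
`∑_{h ∈ W} ∑_{x ∈ W} χ(f (x + h) - f x)`, and `f (x + h) - f x = f h + 2 s (x·h)` is affine
in `x`. Since `2 s ≠ 0` and `χ` is nontrivial, the inner sum is `|W|` when `h ∈ W^⊥` and `0`
otherwise, so `|∑|² ≤ |W| · |W ∩ W^⊥|`; finally `W^⊥ = V` and `|W| = q^(d - dim V)`.
-/

open Matrix Finset
open scoped Classical

/-- The orthogonal complement of a subspace of `F^d` with respect to the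
standard dot product. -/
def perp {F : Type*} [Field F] {d : ℕ} (V : Submodule F (Fin d → F)) :
    Submodule F (Fin d → F) where
  carrier := {w | ∀ v ∈ V, v ⬝ᵥ w = 0}
  add_mem' := by
    intro a b ha hb v hv
    simp [dotProduct_add, ha v hv, hb v hv]
  zero_mem' := by
    intro v hv
    simp
  smul_mem' := by
    intro c a ha v hv
    simp [dotProduct_smul, ha v hv]

lemma AddChar.sum_comp_linearMap {F W R : Type*} [Field F] [AddCommGroup W] [Module F W]
    [Fintype W] [CommRing R] [IsDomain R] {χ : AddChar F R} (hχ : χ ≠ 1) (ℓ : W →ₗ[F] F) :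
    ∑ x, χ (ℓ x) = if ℓ = 0 then (Fintype.card W : R) else 0 := by
  have hψ : χ.compAddMonoidHom ℓ.toAddMonoidHom = 0 ↔ ℓ = 0 := by
    refine ⟨fun h => ?_, fun h => by ext; simp [h]⟩
    by_contra hℓ
    refine hχ (AddChar.compAddMonoidHom_injective_left ℓ.toAddMonoidHom
      (LinearMap.surjective_of_ne_zero hℓ) ?_)
    ext; simp [h]
  simpa only [hψ, AddChar.compAddMonoidHom_apply, LinearMap.toAddMonoidHom_coe] using
    AddChar.sum_eq_ite (χ.compAddMonoidHom ℓ.toAddMonoidHom)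

lemma AddChar.norm_sum_sq_le_sum_norm_sum_sub {G A : Type*} [AddCommGroup G] [Fintype G]
    [AddCommGroup A] [Finite A] (χ : AddChar A ℂ) (f : G → A) :
    ‖∑ x, χ (f x)‖ ^ 2 ≤ ∑ h, ‖∑ x, χ (f (x + h) - f x)‖ := by
  have hdiff : starRingEnd ℂ (∑ x, χ (f x)) * ∑ x, χ (f x) =
      ∑ h, ∑ x, χ (f (x + h) - f x) := by
    rw [map_sum, Fintype.sum_mul_sum, eq_comm, Finset.sum_comm]
    refine Finset.sum_congr rfl fun x _ => Fintype.sum_equiv (Equiv.addLeft x) _ _ fun h => ?_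
    rw [sub_eq_add_neg, AddChar.map_add_eq_mul, AddChar.map_neg_eq_conj, mul_comm]
    rfl
  calc ‖∑ x, χ (f x)‖ ^ 2 = ‖starRingEnd ℂ (∑ x, χ (f x)) * ∑ x, χ (f x)‖ := by
        rw [norm_mul, RCLike.norm_conj, sq]
    _ ≤ ∑ h, ‖∑ x, χ (f (x + h) - f x)‖ := hdiff ▸ norm_sum_le _ _

section DotProduct

variable {R n : Type*} [CommRing R] [Fintype n]

lemma dotProductBilin_isRefl :
    LinearMap.BilinForm.IsRefl (dotProductBilin R R : LinearMap.BilinForm R (n → R)) :=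
  fun v w h => by simpa [dotProduct_comm] using h

lemma dotProductBilin_nondegenerate [DecidableEq n] :
    (dotProductBilin R R : LinearMap.BilinForm R (n → R)).Nondegenerate :=
  ⟨fun v h => dotProduct_eq_zero v h,
    fun w h => dotProduct_eq_zero w fun v => by simpa [dotProduct_comm] using h v⟩

lemma dotProduct_add_self_sub (s : R) (ξ x h : n → R) :
    s * ((x + h) ⬝ᵥ (x + h)) + ξ ⬝ᵥ (x + h) - (s * (x ⬝ᵥ x) + ξ ⬝ᵥ x) =
      (s * (h ⬝ᵥ h) + ξ ⬝ᵥ h) + 2 * s * (x ⬝ᵥ h) := by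
  simp only [dotProduct_add, add_dotProduct, dotProduct_comm h x]
  ring

end DotProduct

section Perp

variable {F : Type*} [Field F] {d : ℕ}

lemma perp_eq_orthogonal (V : Submodule F (Fin d → F)) :
    perp V = LinearMap.BilinForm.orthogonal (dotProductBilin F F) V := rfl

lemma perp_perp (V : Submodule F (Fin d → F)) : perp (perp V) = V := by
  simp only [perp_eq_orthogonal]
  exact LinearMap.BilinForm.orthogonal_orthogonal dotProductBilin_nondegenerate
    dotProductBilin_isRefl V

lemma finrank_perp (V : Submodule F (Fin d → F)) :
    Module.finrank F (perp V) = d - Module.finrank F V := by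
  rw [perp_eq_orthogonal, LinearMap.BilinForm.finrank_orthogonal dotProductBilin_nondegenerate,
    Module.finrank_fin_fun]

end Perp

lemma sum_addChar_mul_dotProduct {F R : Type*} [Field F] [Fintype F] [CommRing R] [IsDomain R]
    {d : ℕ} {χ : AddChar F R} (hχ : χ ≠ 1) {a : F} (ha : a ≠ 0) (W : Submodule F (Fin d → F))
    (h : Fin d → F) :
    ∑ x : W, χ (a * ((x : Fin d → F) ⬝ᵥ h)) = if h ∈ perp W then (Fintype.card W : R) else 0 := by
  have hℓ : a • ((dotProductBilin F F).flip h ∘ₗ W.subtype) = 0 ↔ h ∈ perp W := by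
    rw [smul_eq_zero_iff_right ha, LinearMap.ext_iff]
    simp [perp]
  simpa [hℓ] using
    AddChar.sum_comp_linearMap hχ (a • ((dotProductBilin F F).flip h ∘ₗ W.subtype))

lemma norm_sum_addChar_quadratic_sq_le {F : Type*} [Field F] [Fintype F] (h2 : (2 : F) ≠ 0)
    {χ : AddChar F ℂ} (hχ : χ ≠ 1) {s : F} (hs : s ≠ 0) {d : ℕ} (W : Submodule F (Fin d → F))
    (ξ : Fin d → F) :
    ‖∑ x : W, χ (s * ((x : Fin d → F) ⬝ᵥ x) + ξ ⬝ᵥ x)‖ ^ 2 ≤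
      Nat.card W * Nat.card ↥(W ⊓ perp W) := by
  set f : W → F := fun x => s * ((x : Fin d → F) ⬝ᵥ x) + ξ ⬝ᵥ x
  have hdiff (h : W) : ‖∑ x, χ (f (x + h) - f x)‖ =
      if (h : Fin d → F) ∈ perp W then (Nat.card W : ℝ) else 0 := by
    simp_rw [f, Submodule.coe_add, dotProduct_add_self_sub, AddChar.map_add_eq_mul,
      ← Finset.mul_sum, norm_mul, AddChar.norm_apply, one_mul,
      sum_addChar_mul_dotProduct hχ (mul_ne_zero h2 hs)]
    split_ifs <;> simp
  calc ‖∑ x, χ (f x)‖ ^ 2 ≤ ∑ h, ‖∑ x, χ (f (x + h) - f x)‖ :=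
        AddChar.norm_sum_sq_le_sum_norm_sum_sub χ f
    _ = ∑ h : W, if (h : Fin d → F) ∈ perp W then (Nat.card W : ℝ) else 0 :=
        Finset.sum_congr rfl fun h _ => hdiff h
    _ = Nat.card W * Nat.card ↥(W ⊓ perp W) := by
        rw [Finset.sum_ite, Finset.sum_const_zero, add_zero, Finset.sum_const, nsmul_eq_mul,
          mul_comm, ← Fintype.card_subtype, ← Nat.card_eq_fintype_card,
          Nat.card_congr (Equiv.subtypeSubtypeEquivSubtypeInter (· ∈ W) (· ∈ perp W))]
        rfl

theorem weyl_differencing_bound_general {F : Type*} [Field F] [Fintype F]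
    (hodd : ringChar F ≠ 2) (χ : AddChar F ℂ) (hχ : χ ≠ 1)
    {d j : ℕ}
    (y : Fin (j - 1) → (Fin d → F)) (hy : LinearIndependent F y)
    (ξ : Fin d → F) (s : F) (hs : s ≠ 0) :
    ‖∑ x : ↥(perp (Submodule.span F (Set.range y))),
        χ (s * ((x : Fin d → F) ⬝ᵥ (x : Fin d → F)) + ξ ⬝ᵥ (x : Fin d → F))‖ ^ 2 ≤
      (Fintype.card F : ℝ) ^ (d + 1 - j) *
        Nat.card ↥(Submodule.span F (Set.range y) ⊓
          perp (Submodule.span F (Set.range y))) := by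
  set V := Submodule.span F (Set.range y)
  have hcard : (Nat.card (perp V) : ℝ) ≤ (Fintype.card F : ℝ) ^ (d + 1 - j) := by
    rw [Module.natCard_eq_pow_finrank (K := F), finrank_perp, finrank_span_eq_card hy,
      Fintype.card_fin, Nat.card_eq_fintype_card]
    push_cast
    exact pow_le_pow_right₀ (by exact_mod_cast Fintype.card_pos) (by omega)
  calc _ ≤ (Nat.card (perp V) : ℝ) * Nat.card ↥(perp V ⊓ perp (perp V)) :=
        norm_sum_addChar_quadratic_sq_le (Ring.two_ne_zero hodd) hχ hs (perp V) ξ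
    _ ≤ _ := by
        rw [perp_perp, inf_comm]
        gcongr

/-- Weyl differencing bound: for linearly independent `y_1, …, y_{j-1}`
spanning `V`, a nonzero `s` and any `ξ`,
`|∑_{x ∈ V^⊥} χ(s|x|² + ξ·x)|² ≤ q^{d-j+1} |V ∩ V^⊥|`. -/
theorem weyl_differencing_bound {F : Type*} [Field F] [Fintype F]
    (hodd : ringChar F ≠ 2) (χ : AddChar F ℂ) (hχ : χ ≠ 1)
    {d j : ℕ} (hj : 2 ≤ j)
    (y : Fin (j - 1) → (Fin d → F)) (hy : LinearIndependent F y)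
    (c : Fin (j - 1) → F) (t : F)
    (hz : ∃ z : Fin d → F, ∀ i, y i ⬝ᵥ z = c i)
    (ξ : Fin d → F) (s : F) (hs : s ≠ 0) :
    ‖∑ x : ↥(perp (Submodule.span F (Set.range y))),
        χ (s * ((x : Fin d → F) ⬝ᵥ (x : Fin d → F)) + ξ ⬝ᵥ (x : Fin d → F))‖ ^ 2 ≤
      (Fintype.card F : ℝ) ^ (d + 1 - j) *
        Nat.card ↥(Submodule.span F (Set.range y) ⊓
          perp (Submodule.span F (Set.range y))) :=
  weyl_differencing_bound_general hodd χ hχ y hy ξ s hs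
end
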